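/- Chebyshev-type bound used in All-in's budget feasibility: if winners are processed in ascending order of unit valuations v_1^unit ≤ ... ≤ v_k^unit and each satisfies v_i^unit ≤ B/(Σ_{j≤i} ε̄_j), then paying every winner i the amount ε̄_i · B/(Σ_{j≤k} ε̄_j) yields total payment exactly B and each payment p_i ≥ ε̄_i · v_i^unit ≥ V_i is individually rational. -/
import Mathlib


/-- All-in budget feasibility and individual rationality: winners `0,…,k-1` sorted in
ascending order of unit valuations `V i / ε̄ i`, each satisfying the greedy condition
`V i / ε̄ i ≤ B / (∑_{j ≤ i} ε̄ j)`.  Paying each winner `p i = ε̄ i · B / (∑ j, ε̄ j)`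
exhausts the budget exactly and gives every winner i at least her valuation. -/
theorem stmt_10 (k : ℕ) (hk : 0 < k) (B : ℝ)
    (εbar V : Fin k → ℝ) (hε : ∀ i, 0 < εbar i)
    (hsorted : ∀ i j : Fin k, i ≤ j → V i / εbar i ≤ V j / εbar j)
    (hcond : ∀ i : Fin k,
      V i / εbar i ≤ B / ∑ j ∈ Finset.univ.filter (fun j => j ≤ i), εbar j) :
    (∑ i, εbar i * (B / ∑ j, εbar j)) = B ∧
    ∀ i, V i ≤ εbar i * (B / ∑ j, εbar j) ∧
      εbar i * (V i / εbar i) ≤ εbar i * (B / ∑ j, εbar j) := by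
  have hSpos : 0 < ∑ j, εbar j := Finset.sum_pos (fun j _ => hε j) ⟨⟨0, hk⟩, Finset.mem_univ _⟩
  have hsum : (∑ i, εbar i * (B / ∑ j, εbar j)) = B := by
    rw [← Finset.sum_mul]
    field_simp
  refine ⟨hsum, fun i => ?_⟩
  set m : Fin k := ⟨k - 1, by omega⟩ with hm
  have hfilter : (Finset.univ.filter (fun j => j ≤ m)) = (Finset.univ : Finset (Fin k)) := by
    refine Finset.filter_true_of_mem fun j _ => ?_
    have := j.isLt
    simp only [Fin.le_def, hm]
    omega
  have hlast : V m / εbar m ≤ B / ∑ j, εbar j := by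
    have := hcond m
    rwa [hfilter] at this
  have him : i ≤ m := by
    have := i.isLt
    simp only [Fin.le_def, hm]
    omega
  have hi : V i / εbar i ≤ B / ∑ j, εbar j := (hsorted i m him).trans hlast
  have h2 : εbar i * (V i / εbar i) ≤ εbar i * (B / ∑ j, εbar j) :=
    mul_le_mul_of_nonneg_left hi (hε i).le
  have heq : εbar i * (V i / εbar i) = V i := by
    rw [mul_comm, div_mul_cancel₀ _ (hε i).ne']
  exact ⟨heq ▸ h2, h2⟩
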